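/- Let W : ℕ → A be an infinite word over a finite alphabet A with at least two letters. The following are equivalent: (1) W is eventually periodic; (2) W has only finitely many right special factors; (3) there exists n ≥ 1 such that T_W(n) = T_W(n + 1). -/

import Mathlib

/-- The factor of the infinite word `W` of length `n` occurring at position `i`. -/
def factorAt {A : Type*} (W : ℕ → A) (i n : ℕ) : List A :=
  (List.range n).map (fun j => W (i + j))

/-- `u` is a factor of the infinite word `W`. -/
def IsFactor {A : Type*} (W : ℕ → A) (u : List A) : Prop :=
  ∃ i : ℕ, u = factorAt W i u.length

/-- The complexity function: the number of distinct factors of `W` of length `n`. -/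
noncomputable def complexity {A : Type*} (W : ℕ → A) (n : ℕ) : ℕ :=
  Set.ncard {u : List A | u.length = n ∧ IsFactor W u}

/-- `v` is a right special factor of `W`: it admits at least two distinct
right extensions. -/
def RightSpecial {A : Type*} (W : ℕ → A) (v : List A) : Prop :=
  ∃ x y : A, x ≠ y ∧ IsFactor W (v ++ [x]) ∧ IsFactor W (v ++ [y])

/-- `W` is eventually periodic. -/
def EventuallyPeriodic {A : Type*} (W : ℕ → A) : Prop :=
  ∃ p : ℕ, 0 < p ∧ ∃ N : ℕ, ∀ n ≥ N, W (n + p) = W n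

/-!
Restricting factors of length `n + 1` to their first `n` letters is onto the factors of
length `n`, so `T_W` is nondecreasing, and `T_W n = T_W (n + 1)` makes that restriction
injective: no factor of length `n`, hence no longer factor, is right special. An eventually
periodic word has at most `N + p` factors of each length, so `T_W` cannot increase forever.
Conversely, if no factor of length `n` is right special, each factor of length `n` determines
the next letter, so two occurrences of the same factor of length `n` (which exist by
pigeonhole) propagate to a period.
-/

lemma Nat.exists_eq_succ_of_le_succ_of_bdd {f : ℕ → ℕ} (hmono : ∀ n, f n ≤ f (n + 1))
    {C : ℕ} (hC : ∀ n, f n ≤ C) : ∃ n, 1 ≤ n ∧ f n = f (n + 1) := by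
  by_contra! hne
  have hgrow : ∀ k, k ≤ f (k + 1) := by
    intro k
    induction k with
    | zero => exact Nat.zero_le _
    | succ k ih => have := lt_of_le_of_ne (hmono (k + 1)) (hne (k + 1) (by omega)); omega
  have := hgrow (C + 1)
  have := hC (C + 1 + 1)
  omega

section Factors

variable {A : Type*} {W : ℕ → A}

@[simp] lemma length_factorAt (W : ℕ → A) (i n : ℕ) : (factorAt W i n).length = n := by
  simp [factorAt]

lemma isFactor_factorAt (W : ℕ → A) (i n : ℕ) : IsFactor W (factorAt W i n) :=
  ⟨i, by rw [length_factorAt]⟩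

lemma factorAt_succ (W : ℕ → A) (i n : ℕ) :
    factorAt W i (n + 1) = factorAt W i n ++ [W (i + n)] := by
  simp [factorAt, List.range_succ]

lemma take_factorAt (W : ℕ → A) (i m k : ℕ) :
    (factorAt W i m).take k = factorAt W i (min k m) := by
  simp [factorAt, ← List.map_take, List.take_range]

lemma drop_factorAt (W : ℕ → A) (i m k : ℕ) :
    (factorAt W i m).drop k = factorAt W (i + k) (m - k) := by
  apply List.ext_getElem (by simp)
  intro j _ _
  simp only [factorAt, List.getElem_drop, List.getElem_map, List.getElem_range]
  congr 1
  omega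

lemma factorAt_congr {i j n : ℕ} (h : ∀ k < n, W (i + k) = W (j + k)) :
    factorAt W i n = factorAt W j n :=
  List.map_congr_left fun k hk => h k (List.mem_range.mp hk)

lemma IsFactor.take {u : List A} (hu : IsFactor W u) (k : ℕ) : IsFactor W (u.take k) := by
  obtain ⟨i, hi⟩ := hu
  rw [hi, take_factorAt]
  exact isFactor_factorAt W i _

lemma IsFactor.drop {u : List A} (hu : IsFactor W u) (k : ℕ) : IsFactor W (u.drop k) := by
  obtain ⟨i, hi⟩ := hu
  rw [hi, drop_factorAt]
  exact isFactor_factorAt W (i + k) _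

lemma RightSpecial.isFactor {v : List A} (hv : RightSpecial W v) : IsFactor W v := by
  obtain ⟨x, -, -, hx, -⟩ := hv
  simpa using hx.take v.length

lemma RightSpecial.drop {v : List A} (hv : RightSpecial W v) (k : ℕ) :
    RightSpecial W (v.drop k) := by
  obtain ⟨x, y, hxy, hx, hy⟩ := hv
  have extend (z : A) (hz : IsFactor W (v ++ [z])) : IsFactor W (v.drop k ++ [z]) := by
    rcases le_or_gt k v.length with hk | hk
    · simpa [List.drop_append_of_le_length hk] using hz.drop k
    · simpa [List.drop_eq_nil_of_le hk.le] using hz.drop v.length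
  exact ⟨x, y, hxy, extend x hx, extend y hy⟩

end Factors

section Complexity

variable {A : Type*} {W : ℕ → A}

def factorsOfLength (W : ℕ → A) (n : ℕ) : Set (List A) :=
  {u : List A | u.length = n ∧ IsFactor W u}

lemma complexity_eq_ncard (W : ℕ → A) (n : ℕ) :
    complexity W n = (factorsOfLength W n).ncard := rfl

lemma finite_factorsOfLength [Finite A] (W : ℕ → A) (n : ℕ) :
    (factorsOfLength W n).Finite :=
  (List.finite_length_eq A n).subset fun _ h => h.1

lemma image_take_factorsOfLength_succ (W : ℕ → A) (n : ℕ) :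
    (fun u : List A => u.take n) '' factorsOfLength W (n + 1) = factorsOfLength W n := by
  ext u
  constructor
  · rintro ⟨v, ⟨hv, hf⟩, rfl⟩
    exact ⟨by simp [hv], hf.take n⟩
  · rintro ⟨hu, i, hi⟩
    refine ⟨factorAt W i (n + 1), ⟨length_factorAt W i _, isFactor_factorAt W i _⟩, ?_⟩
    dsimp only
    rw [take_factorAt, min_eq_left n.le_succ, hi, hu]

lemma complexity_le_succ [Finite A] (W : ℕ → A) (n : ℕ) :
    complexity W n ≤ complexity W (n + 1) := by
  simpa only [complexity_eq_ncard, image_take_factorsOfLength_succ] using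
    Set.ncard_image_le (f := fun u : List A => u.take n) (finite_factorsOfLength W (n + 1))

lemma not_rightSpecial_of_complexity_eq [Finite A] {n : ℕ}
    (h : complexity W n = complexity W (n + 1)) {v : List A} (hv : v.length = n) :
    ¬ RightSpecial W v := by
  rintro ⟨x, y, hxy, hx, hy⟩
  have hinj : Set.InjOn (fun u : List A => u.take n) (factorsOfLength W (n + 1)) := by
    apply Set.injOn_of_ncard_image_eq _ (finite_factorsOfLength W (n + 1))
    rw [image_take_factorsOfLength_succ, ← complexity_eq_ncard, ← complexity_eq_ncard, h]
  have := hinj (x₁ := v ++ [x]) (x₂ := v ++ [y]) ⟨by simp [hv], hx⟩ ⟨by simp [hv], hy⟩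
    (by simp [List.take_left' hv])
  exact hxy (by simpa using this)

lemma not_rightSpecial_of_complexity_eq_of_le [Finite A] {n : ℕ}
    (h : complexity W n = complexity W (n + 1)) {v : List A} (hv : n ≤ v.length) :
    ¬ RightSpecial W v := fun hrs =>
  not_rightSpecial_of_complexity_eq h (v := v.drop (v.length - n)) (by simp; omega)
    (hrs.drop _)

lemma exists_factorAt_eq_of_periodic {p N : ℕ} (hp : 0 < p) (hN : ∀ n ≥ N, W (n + p) = W n)
    (n i : ℕ) :
    ∃ i' < N + p, factorAt W i' n = factorAt W i n := by
  induction i using Nat.strong_induction_on with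
  | _ i ih =>
    rcases lt_or_ge i (N + p) with hi | hi
    · exact ⟨i, hi, rfl⟩
    · obtain ⟨i', hi', he⟩ := ih (i - p) (by omega)
      refine ⟨i', hi', he.trans (factorAt_congr fun k _ => ?_)⟩
      rw [← hN (i - p + k) (by omega)]
      congr 1
      omega

lemma complexity_le_of_periodic {p N : ℕ} (hp : 0 < p) (hN : ∀ n ≥ N, W (n + p) = W n)
    (n : ℕ) :
    complexity W n ≤ N + p := by
  have hsub : factorsOfLength W n ⊆ (fun i => factorAt W i n) '' ↑(Finset.range (N + p)) := by
    rintro u ⟨hlen, i, hi⟩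
    obtain ⟨i', hi', he⟩ := exists_factorAt_eq_of_periodic hp hN n i
    exact ⟨i', by simpa using hi', by dsimp only; rw [he, hi, hlen]⟩
  calc complexity W n ≤ ((fun i => factorAt W i n) '' ↑(Finset.range (N + p))).ncard :=
        Set.ncard_le_ncard hsub ((Finset.range (N + p)).finite_toSet.image _)
    _ ≤ (↑(Finset.range (N + p)) : Set ℕ).ncard :=
        Set.ncard_image_le (Finset.range (N + p)).finite_toSet
    _ = N + p := by rw [Set.ncard_coe_finset, Finset.card_range]

end Complexity

section Periodicity

variable {A : Type*} {W : ℕ → A}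

lemma eventuallyPeriodic_of_factorAt_eq {n i j : ℕ} (hij : i < j)
    (hdet : ∀ a b, factorAt W a n = factorAt W b n → W (a + n) = W (b + n))
    (hagree : factorAt W i n = factorAt W j n) : EventuallyPeriodic W := by
  have key : ∀ k, W (i + k) = W (j + k) := by
    intro k
    induction k using Nat.strong_induction_on with
    | _ k ih =>
      rcases lt_or_ge k n with hk | hk
      · have := congrArg (·[k]?) hagree
        simpa [factorAt, hk] using this
      · obtain ⟨m, rfl⟩ : ∃ m, k = m + n := ⟨k - n, by omega⟩
        have hfac : factorAt W (i + m) n = factorAt W (j + m) n :=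
          factorAt_congr fun a ha => by simpa [add_assoc] using ih (m + a) (by omega)
        simpa [add_assoc] using hdet _ _ hfac
  refine ⟨j - i, by omega, i, fun k hk => ?_⟩
  have := key (k - i)
  rw [show i + (k - i) = k by omega, show j + (k - i) = k + (j - i) by omega] at this
  exact this.symm

lemma eventuallyPeriodic_of_not_rightSpecial [Finite A] {n : ℕ}
    (h : ∀ v : List A, v.length = n → ¬ RightSpecial W v) : EventuallyPeriodic W := by
  have hdet : ∀ a b, factorAt W a n = factorAt W b n → W (a + n) = W (b + n) := by
    intro a b he
    by_contra hne
    refine h _ (length_factorAt W a n) ⟨W (a + n), W (b + n), hne, ?_, ?_⟩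
    · rw [← factorAt_succ]; exact isFactor_factorAt W a (n + 1)
    · rw [he, ← factorAt_succ]; exact isFactor_factorAt W b (n + 1)
  have hmem (i : ℕ) : factorAt W i n ∈ factorsOfLength W n :=
    ⟨length_factorAt W i n, isFactor_factorAt W i n⟩
  obtain ⟨i, j, hij, he⟩ := (finite_factorsOfLength W n).exists_lt_map_eq_of_forall_mem hmem
  exact eventuallyPeriodic_of_factorAt_eq hij hdet he

end Periodicity

theorem stmt3_general {A : Type*} [Fintype A] (W : ℕ → A) :
    List.TFAE
      [EventuallyPeriodic W,
       {v : List A | IsFactor W v ∧ RightSpecial W v}.Finite,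
       ∃ n : ℕ, 1 ≤ n ∧ complexity W n = complexity W (n + 1)] := by
  tfae_have 1 → 3 := fun ⟨_, hp, _, hN⟩ =>
    Nat.exists_eq_succ_of_le_succ_of_bdd (complexity_le_succ W) (complexity_le_of_periodic hp hN)
  tfae_have 3 → 2 := fun ⟨n, _, hn⟩ =>
    (List.finite_length_lt A n).subset fun v ⟨_, hrs⟩ =>
      lt_of_not_ge fun hlen => not_rightSpecial_of_complexity_eq_of_le hn hlen hrs
  tfae_have 2 → 1 := by
    intro hfin
    obtain ⟨b, hb⟩ := (hfin.image List.length).bddAbove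
    refine eventuallyPeriodic_of_not_rightSpecial (n := b + 1) fun v hv hrs => ?_
    have : v.length ≤ b := hb ⟨v, ⟨hrs.isFactor, hrs⟩, rfl⟩
    omega
  tfae_finish

/-- For an infinite word over a finite alphabet with at least two letters, the
following are equivalent: eventual periodicity; finitely many right special
factors; the complexity function takes equal values at some `n ≥ 1` and `n+1`. -/
theorem stmt3 {A : Type*} [Fintype A] (hA : 2 ≤ Fintype.card A) (W : ℕ → A) :
    List.TFAE
      [EventuallyPeriodic W,
       {v : List A | IsFactor W v ∧ RightSpecial W v}.Finite,
       ∃ n : ℕ, 1 ≤ n ∧ complexity W n = complexity W (n + 1)] :=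
  stmt3_general W
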